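/- arXiv:cond-mat/0302402 — 4 statements merged into one kernel-verified Lean document; each statement's English description precedes it below -/
import Mathlib

section
/- Let L(u) = u·1_D + (1−u)·Y where P[D] = p, and the conditional distribution functions F_1, F_0 of Y given 1_D = 1 and 1_D = 0 satisfy F_1(0) = 0, F_i(1) = 1. Then for u ∈ (0,1): if α ≤ 1−p then q_α(L(u)) ≤ 1−u, and if α > 1−p then q_α(L(u)) > u. -/
/-!
On `Dᶜ` we have `L(u) = (1-u)Y ≤ 1-u`, so `P[L(u) ≤ 1-u] ≥ 1-p ≥ α`. On `D`,
`L(u) = u + (1-u)Y > u` except on the null event `{Y ≤ 0} ∩ D`, so `P[L(u) ≤ u] ≤ 1-p < α`;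
right-continuity of the distribution function then pushes the quantile strictly above `u`.
-/

open MeasureTheory

/-- The `α`-quantile `q_α(Z) = inf {z : P[Z ≤ z] ≥ α}`. -/
noncomputable def quantile {Ω : Type*} [MeasurableSpace Ω] (μ : Measure Ω)
    (Z : Ω → ℝ) (α : ℝ) : ℝ :=
  sInf {z : ℝ | α ≤ (μ {ω | Z ω ≤ z}).toReal}

open Filter ProbabilityTheory

namespace ProbabilityTheory

variable {ν : Measure ℝ} {α : ℝ}

lemma bddBelow_setOf_le_cdf (hα : 0 < α) : BddBelow {z | α ≤ cdf ν z} := by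
  obtain ⟨b, hb⟩ :=
    eventually_atBot.mp ((tendsto_cdf_atBot (μ := ν)).eventually_lt_const hα)
  exact ⟨b, fun z hz => not_lt.mp fun hzb => (hb z hzb.le).not_ge hz⟩

lemma setOf_le_cdf_nonempty (hα : α < 1) : {z | α ≤ cdf ν z}.Nonempty :=
  ((tendsto_cdf_atTop (μ := ν)).eventually_const_lt hα).exists.imp fun _ => le_of_lt

lemma lt_sInf_setOf_le_cdf {z : ℝ} (hα : α < 1) (hz : cdf ν z < α) :
    z < sInf {z | α ≤ cdf ν z} := by
  have hright : ContinuousWithinAt (cdf ν) (Set.Ioi z) z :=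
    ((cdf ν).right_continuous z).mono Set.Ioi_subset_Ici_self
  obtain ⟨z', hz', hzz'⟩ :=
    ((hright.eventually (gt_mem_nhds hz)).and self_mem_nhdsWithin).exists
  refine hzz'.trans_le (le_csInf (setOf_le_cdf_nonempty hα) fun w hw => ?_)
  by_contra! hwz'
  exact (hz'.trans_le hw).not_ge (monotone_cdf ν hwz'.le)

end ProbabilityTheory

namespace MeasureTheory

variable {Ω : Type*} [MeasurableSpace Ω] {μ : Measure Ω} [IsProbabilityMeasure μ]
  {Z : Ω → ℝ} {α z : ℝ}

lemma toReal_measure_setOf_le_eq_cdf_map (hZ : AEMeasurable Z μ) (z : ℝ) :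
    (μ {ω | Z ω ≤ z}).toReal = cdf (μ.map Z) z := by
  have : IsProbabilityMeasure (μ.map Z) := Measure.isProbabilityMeasure_map hZ
  rw [cdf_eq_real, map_measureReal_apply_of_aemeasurable hZ measurableSet_Iic]
  rfl

lemma quantile_eq_sInf_cdf_map (hZ : AEMeasurable Z μ) :
    quantile μ Z α = sInf {z | α ≤ cdf (μ.map Z) z} := by
  simp only [quantile, toReal_measure_setOf_le_eq_cdf_map hZ]

lemma quantile_le_of_le_measure (hZ : AEMeasurable Z μ) (hα : 0 < α)
    (hz : α ≤ (μ {ω | Z ω ≤ z}).toReal) : quantile μ Z α ≤ z := by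
  rw [quantile_eq_sInf_cdf_map hZ]
  exact csInf_le (bddBelow_setOf_le_cdf hα)
    (show α ≤ cdf (μ.map Z) z by rwa [← toReal_measure_setOf_le_eq_cdf_map hZ])

lemma lt_quantile_of_measure_lt (hZ : AEMeasurable Z μ) (hα : α < 1)
    (hz : (μ {ω | Z ω ≤ z}).toReal < α) : z < quantile μ Z α := by
  rw [quantile_eq_sInf_cdf_map hZ]
  exact lt_sInf_setOf_le_cdf hα (by rwa [← toReal_measure_setOf_le_eq_cdf_map hZ])

end MeasureTheory

section SemiAsymptoticModel

variable {Ω : Type*} [MeasurableSpace Ω] {μ : Measure Ω} {D : Set Ω} {Y : Ω → ℝ} {u : ℝ}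

lemma measure_compl_le_measure_setOf_le_one_sub (hY1 : ∀ᵐ ω ∂μ, Y ω ≤ 1) (hu : u ≤ 1) :
    μ Dᶜ ≤ μ {ω | u * D.indicator (fun _ => (1 : ℝ)) ω + (1 - u) * Y ω ≤ 1 - u} := by
  refine measure_mono_ae ?_
  filter_upwards [hY1] with ω hω hωD
  change u * D.indicator (fun _ => (1 : ℝ)) ω + (1 - u) * Y ω ≤ 1 - u
  rw [Set.indicator_of_notMem hωD, mul_zero, zero_add]
  nlinarith

lemma measure_setOf_le_le_measure_compl (hYD : μ ({ω | Y ω ≤ 0} ∩ D) = 0) (hu : u < 1) :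
    μ {ω | u * D.indicator (fun _ => (1 : ℝ)) ω + (1 - u) * Y ω ≤ u} ≤ μ Dᶜ := by
  have hsub : {ω | u * D.indicator (fun _ => (1 : ℝ)) ω + (1 - u) * Y ω ≤ u} ⊆
      Dᶜ ∪ ({ω | Y ω ≤ 0} ∩ D) := by
    intro ω hω
    by_cases hωD : ω ∈ D
    · rw [Set.mem_ofPred_eq, Set.indicator_of_mem hωD, mul_one] at hω
      refine Or.inr ⟨show Y ω ≤ 0 from ?_, hωD⟩
      by_contra! hY0
      nlinarith [mul_pos (sub_pos.2 hu) hY0]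
    · exact Or.inl hωD
  calc _ ≤ μ (Dᶜ ∪ ({ω | Y ω ≤ 0} ∩ D)) := measure_mono hsub
    _ ≤ μ Dᶜ + μ ({ω | Y ω ≤ 0} ∩ D) := measure_union_le _ _
    _ = μ Dᶜ := by rw [hYD, add_zero]

end SemiAsymptoticModel

theorem quantile_bounds_semi_asymptotic_general
    {Ω : Type*} [MeasurableSpace Ω] (μ : Measure Ω) [IsProbabilityMeasure μ]
    (D : Set Ω) (hD : MeasurableSet D)
    (Y : Ω → ℝ) (hY : Measurable Y)
    (hY01 : ∀ᵐ ω ∂μ, Y ω ∈ Set.Icc (0 : ℝ) 1)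
    (p : ℝ) (hp : p = (μ D).toReal)
    (hF1_0 : μ ({ω | Y ω ≤ 0} ∩ D) = 0)
    (L : ℝ → Ω → ℝ)
    (hL : ∀ u ω, L u ω = u * D.indicator (fun _ => (1 : ℝ)) ω + (1 - u) * Y ω)
    (u : ℝ) (hu : u ∈ Set.Ioo (0 : ℝ) 1)
    (α : ℝ) (hα : α ∈ Set.Ioo (0 : ℝ) 1) :
    (α ≤ 1 - p → quantile μ (L u) α ≤ 1 - u) ∧
    (1 - p < α → u < quantile μ (L u) α) := by
  have hLu : L u = fun ω => u * D.indicator (fun _ => (1 : ℝ)) ω + (1 - u) * Y ω :=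
    funext (hL u)
  have hLmeas : AEMeasurable (L u) μ := by
    rw [hLu]
    exact ((measurable_const.mul (measurable_const.indicator hD)).add
      (measurable_const.mul hY)).aemeasurable
  have hDc : (μ Dᶜ).toReal = 1 - p := by
    rw [hp, ← measureReal_def, ← measureReal_def, measureReal_compl hD, probReal_univ]
  constructor
  · intro hαp
    refine quantile_le_of_le_measure hLmeas hα.1 (hαp.trans (hDc ▸ ?_))
    rw [hLu]
    exact ENNReal.toReal_mono (measure_ne_top _ _)
      (measure_compl_le_measure_setOf_le_one_sub (hY01.mono fun _ h => h.2) hu.2.le)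
  · intro hαp
    refine lt_quantile_of_measure_lt hLmeas hα.2 (lt_of_le_of_lt ?_ (hDc ▸ hαp))
    rw [hLu]
    exact ENNReal.toReal_mono (measure_ne_top _ _) (measure_setOf_le_le_measure_compl hF1_0 hu.2)

/-- Semi-asymptotic two-asset model `L(u) = u·1_D + (1-u)·Y` with `Y ∈ [0,1]` a.s.
and `P[Y ≤ 0 | D] = 0` (i.e. `F₁(0) = 0`): for `u ∈ (0,1)` and `α ∈ (0,1)`,
if `α ≤ 1 - p` then `q_α(L(u)) ≤ 1 - u`, and if `α > 1 - p` then `q_α(L(u)) > u`. -/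
theorem quantile_bounds_semi_asymptotic
    {Ω : Type*} [MeasurableSpace Ω] (μ : Measure Ω) [IsProbabilityMeasure μ]
    (D : Set Ω) (hD : MeasurableSet D)
    (Y : Ω → ℝ) (hY : Measurable Y)
    (hY01 : ∀ᵐ ω ∂μ, Y ω ∈ Set.Icc (0 : ℝ) 1)
    (p : ℝ) (hp : p = (μ D).toReal) (hp_mem : p ∈ Set.Ioo (0 : ℝ) 1)
    (hF1_0 : μ ({ω | Y ω ≤ 0} ∩ D) = 0)
    (L : ℝ → Ω → ℝ)
    (hL : ∀ u ω, L u ω = u * D.indicator (fun _ => (1 : ℝ)) ω + (1 - u) * Y ω)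
    (u : ℝ) (hu : u ∈ Set.Ioo (0 : ℝ) 1)
    (α : ℝ) (hα : α ∈ Set.Ioo (0 : ℝ) 1) :
    (α ≤ 1 - p → quantile μ (L u) α ≤ 1 - u) ∧
    (1 - p < α → u < quantile μ (L u) α) :=
  quantile_bounds_semi_asymptotic_general μ D hD Y hY hY01 p hp hF1_0 L hL u hu α hα
end

section
/- Under the assumptions of the two-asset semi-asymptotic model with F_1(0) = 0, the quantile q_α(L(u)) converges as u → 1 to 1 if p > 1−α and to 0 if p ≤ 1−α. -/
/-!
For `u ∈ (0,1)` the loss `L(u)` lies a.s. in `[0,1]`; off `D` it is at most `1 - u`, while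
on `D` it exceeds `u` a.s. because `F₁(0) = 0`. So if `1 - p < α`, then
`P[L(u) ≤ z] ≤ 1 - p < α` for every `z < u`, and `q_α(L(u)) ∈ [u, 1]`; if `p ≤ 1 - α`, then
`P[L(u) ≤ 1 - u] ≥ 1 - p ≥ α`, and `q_α(L(u)) ∈ [0, 1 - u]`. Let `u → 1`.
-/

open MeasureTheory Filter
open Set Topology

theorem quantile_mem_Icc {Ω : Type*} [MeasurableSpace Ω] {μ : Measure Ω} {Z : Ω → ℝ}
    {α a b : ℝ} (hlow : ∀ z < a, μ.real {ω | Z ω ≤ z} < α)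
    (hup : α ≤ μ.real {ω | Z ω ≤ b}) : quantile μ Z α ∈ Icc a b := by
  have hbdd : a ∈ lowerBounds {z : ℝ | α ≤ μ.real {ω | Z ω ≤ z}} :=
    fun z hz => not_lt.1 fun hza => (hlow z hza).not_ge hz
  exact ⟨le_csInf ⟨b, hup⟩ hbdd, csInf_le ⟨a, hbdd⟩ hup⟩

noncomputable def semiAsymptoticLoss {Ω : Type*} (D : Set Ω) (Y : Ω → ℝ)
    (u : ℝ) (ω : Ω) : ℝ :=
  u * D.indicator (fun _ => 1) ω + (1 - u) * Y ω

namespace semiAsymptoticLoss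

variable {Ω : Type*} {D : Set Ω} {Y : Ω → ℝ} {u z : ℝ} {ω : Ω}

theorem apply_of_mem (h : ω ∈ D) : semiAsymptoticLoss D Y u ω = u + (1 - u) * Y ω := by
  simp [semiAsymptoticLoss, h]

theorem apply_of_notMem (h : ω ∉ D) : semiAsymptoticLoss D Y u ω = (1 - u) * Y ω := by
  simp [semiAsymptoticLoss, h]

theorem mem_Icc (hu : u ∈ Icc (0 : ℝ) 1) (hY : Y ω ∈ Icc (0 : ℝ) 1) :
    semiAsymptoticLoss D Y u ω ∈ Icc (0 : ℝ) 1 := by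
  have hind : D.indicator (fun _ => (1 : ℝ)) ω ∈ Icc (0 : ℝ) 1 := by
    by_cases h : ω ∈ D <;> simp [h]
  simpa [semiAsymptoticLoss] using
    convex_Icc (0 : ℝ) 1 hind hY hu.1 (sub_nonneg.2 hu.2) (add_sub_cancel u 1)

variable [MeasurableSpace Ω] {μ : Measure Ω}

theorem measureReal_le_one [IsProbabilityMeasure μ]
    (hY01 : ∀ᵐ ω ∂μ, Y ω ∈ Icc (0 : ℝ) 1) (hu : u ∈ Icc (0 : ℝ) 1) :
    μ.real {ω | semiAsymptoticLoss D Y u ω ≤ 1} = 1 := by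
  have hae : {ω | semiAsymptoticLoss D Y u ω ≤ 1} =ᵐ[μ] (univ : Set Ω) := by
    refine ae_eq_univ.2 (measure_eq_zero_iff_ae_notMem.2 ?_)
    filter_upwards [hY01] with ω hω hlt
    exact hlt (mem_Icc hu hω).2
  rw [measureReal_congr hae, probReal_univ]

theorem measureReal_le_of_neg (hY01 : ∀ᵐ ω ∂μ, Y ω ∈ Icc (0 : ℝ) 1)
    (hu : u ∈ Icc (0 : ℝ) 1) (hz : z < 0) :
    μ.real {ω | semiAsymptoticLoss D Y u ω ≤ z} = 0 := by
  have hnull : μ {ω | semiAsymptoticLoss D Y u ω ≤ z} = 0 := by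
    refine measure_eq_zero_iff_ae_notMem.2 ?_
    filter_upwards [hY01] with ω hω hle
    exact hz.not_ge ((mem_Icc hu hω).1.trans hle)
  simp [Measure.real, hnull]

theorem measureReal_compl_le [IsFiniteMeasure μ] (hY01 : ∀ᵐ ω ∂μ, Y ω ∈ Icc (0 : ℝ) 1)
    (hu : u ≤ 1) : μ.real Dᶜ ≤ μ.real {ω | semiAsymptoticLoss D Y u ω ≤ 1 - u} := by
  refine ENNReal.toReal_mono (measure_ne_top _ _) (measure_mono_ae ?_)
  filter_upwards [hY01] with ω hω hωD
  change semiAsymptoticLoss D Y u ω ≤ 1 - u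
  rw [apply_of_notMem hωD]
  nlinarith [hω.2]

/-- Since `Y > 0` a.e. on `D`, the loss exceeds `u` on almost all of `D`. -/
theorem measureReal_le_compl [IsFiniteMeasure μ] (hF1_0 : μ ({ω | Y ω ≤ 0} ∩ D) = 0)
    (hu : u < 1) (hz : z < u) :
    μ.real {ω | semiAsymptoticLoss D Y u ω ≤ z} ≤ μ.real Dᶜ := by
  refine ENNReal.toReal_mono (measure_ne_top _ _) (measure_mono_ae ?_)
  filter_upwards [measure_eq_zero_iff_ae_notMem.1 hF1_0] with ω hω hle hωD
  change semiAsymptoticLoss D Y u ω ≤ z at hle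
  rw [apply_of_mem hωD] at hle
  exact hω ⟨show Y ω ≤ 0 by nlinarith, hωD⟩

end semiAsymptoticLoss

theorem quantile_limit_semi_asymptotic_general
    {Ω : Type*} [MeasurableSpace Ω] (μ : Measure Ω) [IsProbabilityMeasure μ]
    (D : Set Ω) (hD : MeasurableSet D)
    (Y : Ω → ℝ)
    (hY01 : ∀ᵐ ω ∂μ, Y ω ∈ Set.Icc (0 : ℝ) 1)
    (p : ℝ) (hp : p = (μ D).toReal)
    (hF1_0 : μ ({ω | Y ω ≤ 0} ∩ D) = 0)
    (L : ℝ → Ω → ℝ)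
    (hL : ∀ u ω, L u ω = u * D.indicator (fun _ => (1 : ℝ)) ω + (1 - u) * Y ω)
    (α : ℝ) (hα : α ∈ Set.Ioo (0 : ℝ) 1) :
    (1 - α < p →
      Tendsto (fun u => quantile μ (L u) α) (nhdsWithin 1 (Set.Ioo 0 1)) (nhds 1)) ∧
    (p ≤ 1 - α →
      Tendsto (fun u => quantile μ (L u) α) (nhdsWithin 1 (Set.Ioo 0 1)) (nhds 0)) := by
  obtain rfl : L = semiAsymptoticLoss D Y := funext₂ hL
  have hDc : μ.real Dᶜ = 1 - p := hp ▸ probReal_compl_eq_one_sub hD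
  have hone : ∀ u ∈ Ioo (0 : ℝ) 1, α ≤ μ.real {ω | semiAsymptoticLoss D Y u ω ≤ 1} :=
    fun u hu =>
      (semiAsymptoticLoss.measureReal_le_one hY01 (Ioo_subset_Icc_self hu)).symm ▸ hα.2.le
  constructor
  · intro hpα
    have hbounds : ∀ u ∈ Ioo (0 : ℝ) 1, quantile μ (semiAsymptoticLoss D Y u) α ∈ Icc u 1 :=
      fun u hu => quantile_mem_Icc
        (fun z hz =>
          (semiAsymptoticLoss.measureReal_le_compl hF1_0 hu.2 hz).trans_lt (by linarith))
        (hone u hu)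
    exact tendsto_of_tendsto_of_tendsto_of_le_of_le'
      (tendsto_nhdsWithin_of_tendsto_nhds tendsto_id) tendsto_const_nhds
      (eventually_nhdsWithin_of_forall fun u hu => (hbounds u hu).1)
      (eventually_nhdsWithin_of_forall fun u hu => (hbounds u hu).2)
  · intro hpα
    have hbounds :
        ∀ u ∈ Ioo (0 : ℝ) 1, quantile μ (semiAsymptoticLoss D Y u) α ∈ Icc 0 (1 - u) :=
      fun u hu => quantile_mem_Icc
        (fun z hz => (semiAsymptoticLoss.measureReal_le_of_neg hY01
          (Ioo_subset_Icc_self hu) hz).trans_lt hα.1)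
        (by linarith [semiAsymptoticLoss.measureReal_compl_le (D := D) hY01 hu.2.le])
    have hsub : Tendsto (fun u : ℝ => 1 - u) (𝓝 1) (𝓝 (1 - 1)) :=
      tendsto_const_nhds.sub tendsto_id
    rw [sub_self] at hsub
    exact tendsto_of_tendsto_of_tendsto_of_le_of_le' tendsto_const_nhds
      (tendsto_nhdsWithin_of_tendsto_nhds hsub)
      (eventually_nhdsWithin_of_forall fun u hu => (hbounds u hu).1)
      (eventually_nhdsWithin_of_forall fun u hu => (hbounds u hu).2)

/-- In the semi-asymptotic model `L(u) = u·1_D + (1-u)·Y` with `F₁(0) = 0`, as `u → 1⁻`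
the quantile `q_α(L(u))` converges to `1` if `p > 1 - α` and to `0` if `p ≤ 1 - α`. -/
theorem quantile_limit_semi_asymptotic
    {Ω : Type*} [MeasurableSpace Ω] (μ : Measure Ω) [IsProbabilityMeasure μ]
    (D : Set Ω) (hD : MeasurableSet D)
    (Y : Ω → ℝ) (hY : Measurable Y)
    (hY01 : ∀ᵐ ω ∂μ, Y ω ∈ Set.Icc (0 : ℝ) 1)
    (p : ℝ) (hp : p = (μ D).toReal) (hp_mem : p ∈ Set.Ioo (0 : ℝ) 1)
    (hF1_0 : μ ({ω | Y ω ≤ 0} ∩ D) = 0)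
    (L : ℝ → Ω → ℝ)
    (hL : ∀ u ω, L u ω = u * D.indicator (fun _ => (1 : ℝ)) ω + (1 - u) * Y ω)
    (α : ℝ) (hα : α ∈ Set.Ioo (0 : ℝ) 1) :
    (1 - α < p →
      Tendsto (fun u => quantile μ (L u) α) (nhdsWithin 1 (Set.Ioo 0 1)) (nhds 1)) ∧
    (p ≤ 1 - α →
      Tendsto (fun u => quantile μ (L u) α) (nhdsWithin 1 (Set.Ioo 0 1)) (nhds 0)) :=
  quantile_limit_semi_asymptotic_general μ D hD Y hY01 p hp hF1_0 L hL α hα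
end

section
/- In the semi-asymptotic model, assume Y given 1_D = i has continuous density f_i concentrated and positive on (0,1), for i = 0,1. Then the conditional default probability P[D | L(u) = q_α(L(u))] = p·f_1((q−u)/(1−u)) / (p·f_1((q−u)/(1−u)) + (1−p)·f_0(q/(1−u))) (with q = q_α(L(u))) converges as u → 1 to 1 if p > 1−α and to 0 if p < 1−α. -/
/-!
Given `D`, the loss `L(u)` is `u + (1 - u) Y`, supported in `(u, 1)`; given `Dᶜ` it is `(1 - u) Y`,
supported in `(0, 1 - u)`. For `u ≥ 1/2` these supports are separated, so the `α`-quantile of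
`L(u)` lies in the upper component when `α > 1 - p`, at `u + (1 - u) c₁` with
`F₁(c₁) = (α - (1 - p)) / p`, and in the lower one when `α < 1 - p`, at `(1 - u) c₀` with
`F₀(c₀) = α / (1 - p)`. At such a point exactly one of the two densities in the ratio vanishes,
so the conditional default probability is eventually constant, equal to `1` or `0`.
-/

open MeasureTheory Filter

open Set Topology

lemma nonneg_of_forall_pos_of_forall_eq_zero {X : Type*} {g : X → ℝ} {s : Set X}
    (hpos : ∀ x ∈ s, 0 < g x) (hzero : ∀ x ∉ s, g x = 0) (x : X) : 0 ≤ g x := by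
  by_cases hx : x ∈ s
  exacts [(hpos x hx).le, (hzero x hx).ge]

section DensityOnInterval

variable {f : ℝ → ℝ} {a b : ℝ}

lemma Continuous.integrable_of_eq_zero_off_Ioo (hc : Continuous f)
    (hzero : ∀ z ∉ Ioo a b, f z = 0) : Integrable f :=
  hc.integrable_of_hasCompactSupport <|
    HasCompactSupport.intro isCompact_Icc fun z hz => hzero z fun h => hz (Ioo_subset_Icc_self h)

lemma setIntegral_Iic_eq_zero_of_le (hzero : ∀ z ∉ Ioo a b, f z = 0) {y : ℝ} (hy : y ≤ a) :
    ∫ t in Iic y, f t = 0 :=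
  setIntegral_eq_zero_of_forall_eq_zero fun t ht => hzero t fun h => (le_trans ht hy).not_gt h.1

lemma setIntegral_Iic_eq_of_le (hzero : ∀ z ∉ Ioo a b, f z = 0) {y : ℝ} (hy : b ≤ y) :
    ∫ t in Iic y, f t = ∫ t in Iic b, f t :=
  setIntegral_eq_of_subset_of_forall_sdiff_eq_zero measurableSet_Iic (Iic_subset_Iic.2 hy)
    fun t ht => hzero t fun h => ht.2 h.2.le

lemma setIntegral_Iic_le (hi : Integrable f) (hpos : ∀ z ∈ Ioo a b, 0 < f z)
    (hzero : ∀ z ∉ Ioo a b, f z = 0) (y : ℝ) :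
    ∫ t in Iic y, f t ≤ ∫ t in Iic b, f t := by
  rw [← setIntegral_Iic_eq_of_le hzero (le_max_right y b)]
  exact setIntegral_mono_set hi.integrableOn
    (Eventually.of_forall (nonneg_of_forall_pos_of_forall_eq_zero hpos hzero))
    (Iic_subset_Iic.2 (le_max_left y b)).eventuallyLE

lemma setIntegral_Iic_lt_of_lt (hi : Integrable f) (hpos : ∀ z ∈ Ioo a b, 0 < f z)
    (hzero : ∀ z ∉ Ioo a b, f z = 0) (hab : a < b) {x y : ℝ} (hxy : x < y) (hay : a < y)
    (hxb : x < b) :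
    ∫ t in Iic x, f t < ∫ t in Iic y, f t := by
  rw [← Iic_union_Ioc_eq_Iic hxy.le, setIntegral_union (Iic_disjoint_Ioc le_rfl)
    measurableSet_Ioc hi.integrableOn hi.integrableOn, lt_add_iff_pos_right,
    setIntegral_pos_iff_support_of_nonneg_ae
      (Eventually.of_forall (nonneg_of_forall_pos_of_forall_eq_zero hpos hzero)) hi.integrableOn]
  have hsub : Ioo (max x a) (min y b) ⊆ Function.support f ∩ Ioc x y := fun z hz =>
    ⟨(hpos z ⟨(le_max_right x a).trans_lt hz.1, hz.2.trans_le (min_le_right y b)⟩).ne',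
      (le_max_left x a).trans_lt hz.1, (hz.2.trans_le (min_le_left y b)).le⟩
  refine lt_of_lt_of_le ?_ (measure_mono hsub)
  simpa [Real.volume_Ioo] using max_lt (lt_min hxy hxb) (lt_min hay hab)

lemma tendsto_measure_setOf_le_inter_atTop {Ω : Type*} [MeasurableSpace Ω] (μ : Measure Ω)
    (Y : Ω → ℝ) (S : Set Ω) :
    Tendsto (fun y : ℝ => μ ({ω | Y ω ≤ y} ∩ S)) atTop (𝓝 (μ S)) := by
  have hS : ⋃ y : ℝ, {ω | Y ω ≤ y} ∩ S = S := by
    ext ω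
    simpa using fun _ => ⟨Y ω, le_rfl⟩
  simpa only [hS, Function.comp_def] using tendsto_measure_iUnion_atTop (μ := μ)
    (s := fun y : ℝ => {ω | Y ω ≤ y} ∩ S) fun y y' h =>
      inter_subset_inter_left S fun ω (hω : Y ω ≤ y) => hω.trans h

lemma setIntegral_Iic_eq_measure_div (hzero : ∀ z ∉ Ioo a b, f z = 0) {Ω : Type*}
    [MeasurableSpace Ω] (μ : Measure Ω) [IsFiniteMeasure μ] (Y : Ω → ℝ) (S : Set Ω) (c : ℝ)
    (hF : ∀ y, (μ ({ω | Y ω ≤ y} ∩ S)).toReal / c = ∫ t in Iic y, f t) :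
    ∫ t in Iic b, f t = (μ S).toReal / c := by
  have hlim : Tendsto (fun y => ∫ t in Iic y, f t) atTop (𝓝 ((μ S).toReal / c)) := by
    simp_rw [← hF]
    exact ((ENNReal.tendsto_toReal (measure_ne_top μ S)).comp
      (tendsto_measure_setOf_le_inter_atTop μ Y S)).div_const c
  refine tendsto_nhds_unique (tendsto_const_nhds.congr' ?_) hlim
  filter_upwards [eventually_ge_atTop b] with y hy using (setIntegral_Iic_eq_of_le hzero hy).symm

lemma exists_mem_Ioo_setIntegral_Iic_eq (hi : Integrable f) (hpos : ∀ z ∈ Ioo a b, 0 < f z)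
    (hzero : ∀ z ∉ Ioo a b, f z = 0) (hab : a < b) (hone : ∫ t in Iic b, f t = 1) {v : ℝ}
    (hv : v ∈ Ioo 0 1) :
    ∃ c ∈ Ioo a b, ∫ t in Iic c, f t = v ∧ ∀ y < c, ∫ t in Iic y, f t < v := by
  have hcont : ContinuousOn (fun y => ∫ t in Iic y, f t) (Icc a b) :=
    hi.integrableOn.continuousOn_Iic_primitive_Iic.mono Icc_subset_Iic_self
  rw [← setIntegral_Iic_eq_zero_of_le hzero le_rfl, ← hone] at hv
  obtain ⟨c, hc, hcv⟩ := intermediate_value_Ioo hab.le hcont hv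
  refine ⟨c, hc, hcv, fun y hy => hcv ▸ ?_⟩
  exact setIntegral_Iic_lt_of_lt hi hpos hzero hab hy hc.1 (hy.trans hc.2)

end DensityOnInterval

lemma toReal_measure_indicator_add_le {Ω : Type*} [MeasurableSpace Ω] (μ : Measure Ω)
    [IsFiniteMeasure μ] {D : Set Ω} (hD : MeasurableSet D) (Y : Ω → ℝ) {p : ℝ} (hp : p ≠ 0)
    (hp1 : 1 - p ≠ 0) {F₀ F₁ : ℝ → ℝ}
    (hF₁ : ∀ y, (μ ({ω | Y ω ≤ y} ∩ D)).toReal / p = F₁ y)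
    (hF₀ : ∀ y, (μ ({ω | Y ω ≤ y} ∩ Dᶜ)).toReal / (1 - p) = F₀ y) {u : ℝ} (hu : u < 1) (z : ℝ) :
    (μ {ω | u * D.indicator (fun _ => (1 : ℝ)) ω + (1 - u) * Y ω ≤ z}).toReal =
      p * F₁ ((z - u) / (1 - u)) + (1 - p) * F₀ (z / (1 - u)) := by
  have h1u : 0 < 1 - u := sub_pos.2 hu
  have hsplit : {ω | u * D.indicator (fun _ => (1 : ℝ)) ω + (1 - u) * Y ω ≤ z} ∩ D =
      {ω | Y ω ≤ (z - u) / (1 - u)} ∩ D ∧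
      {ω | u * D.indicator (fun _ => (1 : ℝ)) ω + (1 - u) * Y ω ≤ z} \ D =
      {ω | Y ω ≤ z / (1 - u)} ∩ Dᶜ := by
    constructor <;> ext ω <;> by_cases hω : ω ∈ D <;>
      simp [hω, le_div_iff₀ h1u, sdiff_eq] <;> constructor <;> intro <;> linarith
  rw [← measure_inter_add_sdiff _ hD, hsplit.1, hsplit.2,
    ENNReal.toReal_add (measure_ne_top _ _) (measure_ne_top _ _), ← hF₁, ← hF₀,
    mul_div_cancel₀ _ hp, mul_div_cancel₀ _ hp1]

lemma quantile_eq_of_le_of_forall_lt {Ω : Type*} [MeasurableSpace Ω] (μ : Measure Ω) (Z : Ω → ℝ)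
    {α z₀ : ℝ} (h₀ : α ≤ (μ {ω | Z ω ≤ z₀}).toReal)
    (hlt : ∀ z < z₀, (μ {ω | Z ω ≤ z}).toReal < α) :
    quantile μ Z α = z₀ :=
  IsLeast.csInf_eq ⟨h₀, fun z hz => not_lt.1 fun h => (hlt z h).not_ge hz⟩

section Mixture

variable {Ω : Type*} [MeasurableSpace Ω] {μ : Measure Ω} {Z : Ω → ℝ} {F₀ F₁ f₀ f₁ : ℝ → ℝ}
  {p u α c : ℝ}

lemma quantile_eq_in_upper_component
    (hG : ∀ z, (μ {ω | Z ω ≤ z}).toReal = p * F₁ ((z - u) / (1 - u)) + (1 - p) * F₀ (z / (1 - u)))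
    (hp : 0 < p) (hp1 : p ≤ 1) (hu : 1 / 2 ≤ u) (hu1 : u < 1)
    (hF₀le : ∀ y, F₀ y ≤ 1) (hF₀one : ∀ y, 1 ≤ y → F₀ y = 1) (hc : 0 ≤ c)
    (hF₁c : F₁ c = (α - (1 - p)) / p) (hF₁lt : ∀ y < c, F₁ y < (α - (1 - p)) / p) :
    quantile μ Z α = u + (1 - u) * c := by
  have h1u : 0 < 1 - u := sub_pos.2 hu1
  refine quantile_eq_of_le_of_forall_lt μ Z ?_ fun z hz => ?_
  · rw [hG, hF₀one _ ((one_le_div h1u).2 (by nlinarith)),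
      show (u + (1 - u) * c - u) / (1 - u) = c by field_simp; ring, hF₁c,
      mul_div_cancel₀ _ hp.ne']
    linarith
  · have h₁ := mul_lt_mul_of_pos_left
      (hF₁lt ((z - u) / (1 - u)) ((div_lt_iff₀ h1u).2 (by linarith))) hp
    have h₀ := mul_le_mul_of_nonneg_left (hF₀le (z / (1 - u))) (sub_nonneg.2 hp1)
    rw [mul_div_cancel₀ _ hp.ne'] at h₁
    rw [hG]
    linarith

lemma quantile_eq_in_lower_component
    (hG : ∀ z, (μ {ω | Z ω ≤ z}).toReal = p * F₁ ((z - u) / (1 - u)) + (1 - p) * F₀ (z / (1 - u)))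
    (hp1 : p < 1) (hu : 1 / 2 ≤ u) (hu1 : u < 1) (hF₁zero : ∀ y ≤ 0, F₁ y = 0)
    (hc : c ≤ 1) (hF₀c : F₀ c = α / (1 - p)) (hF₀lt : ∀ y < c, F₀ y < α / (1 - p)) :
    quantile μ Z α = (1 - u) * c := by
  have h1u : 0 < 1 - u := sub_pos.2 hu1
  have h1p : 0 < 1 - p := sub_pos.2 hp1
  have hF₁ : ∀ z ≤ (1 - u) * c, F₁ ((z - u) / (1 - u)) = 0 := fun z hz =>
    hF₁zero _ (div_nonpos_of_nonpos_of_nonneg (by nlinarith) h1u.le)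
  refine quantile_eq_of_le_of_forall_lt μ Z ?_ fun z hz => ?_
  · rw [hG, hF₁ _ le_rfl, mul_div_cancel_left₀ c h1u.ne', hF₀c, mul_div_cancel₀ _ h1p.ne']
    linarith
  · have h₀ := mul_lt_mul_of_pos_left
      (hF₀lt (z / (1 - u)) ((div_lt_iff₀ h1u).2 (by linarith))) h1p
    rw [mul_div_cancel₀ _ h1p.ne'] at h₀
    rw [hG, hF₁ _ hz.le]
    linarith

lemma mixture_ratio_upper_eq_one (hf₀ : ∀ z ∉ Ioo 0 1, f₀ z = 0)
    (hf₁ : ∀ z ∈ Ioo 0 1, 0 < f₁ z) (hp : 0 < p) (hc : c ∈ Ioo 0 1) (hu : 1 / 2 ≤ u)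
    (hu1 : u < 1) :
    p * f₁ ((u + (1 - u) * c - u) / (1 - u)) /
      (p * f₁ ((u + (1 - u) * c - u) / (1 - u)) + (1 - p) * f₀ ((u + (1 - u) * c) / (1 - u)))
      = 1 := by
  have h1u : 0 < 1 - u := sub_pos.2 hu1
  have hf₀q : f₀ ((u + (1 - u) * c) / (1 - u)) = 0 := hf₀ _ fun h => h.2.not_ge <| by
    rw [one_le_div h1u]; nlinarith [hc.1]
  rw [hf₀q, show (u + (1 - u) * c - u) / (1 - u) = c by field_simp; ring, mul_zero, add_zero,
    div_self (mul_pos hp (hf₁ c hc)).ne']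

lemma mixture_ratio_lower_eq_zero (hf₁ : ∀ z ∉ Ioo 0 1, f₁ z = 0) (hc : c ≤ 1)
    (hu : 1 / 2 ≤ u) (hu1 : u < 1) :
    p * f₁ (((1 - u) * c - u) / (1 - u)) /
      (p * f₁ (((1 - u) * c - u) / (1 - u)) + (1 - p) * f₀ ((1 - u) * c / (1 - u))) = 0 := by
  have h1u : 0 < 1 - u := sub_pos.2 hu1
  rw [hf₁ _ fun h => h.1.not_ge <| div_nonpos_of_nonpos_of_nonneg (by nlinarith) h1u.le,
    mul_zero, zero_div]

end Mixture

theorem cond_default_prob_limit_general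
    {Ω : Type*} [MeasurableSpace Ω] (μ : Measure Ω) [IsProbabilityMeasure μ]
    (D : Set Ω) (hD : MeasurableSet D)
    (Y : Ω → ℝ)
    (p : ℝ) (hp : p = (μ D).toReal) (hp_mem : p ∈ Set.Ioo (0 : ℝ) 1)
    (f0 f1 : ℝ → ℝ)
    (hf0_cont : Continuous f0) (hf1_cont : Continuous f1)
    (hf0_pos : ∀ z ∈ Set.Ioo (0 : ℝ) 1, 0 < f0 z)
    (hf1_pos : ∀ z ∈ Set.Ioo (0 : ℝ) 1, 0 < f1 z)
    (hf0_zero : ∀ z ∉ Set.Ioo (0 : ℝ) 1, f0 z = 0)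
    (hf1_zero : ∀ z ∉ Set.Ioo (0 : ℝ) 1, f1 z = 0)
    -- f₁, f₀ are the conditional densities of Y given D and Dᶜ respectively
    (hF1 : ∀ y : ℝ, (μ ({ω | Y ω ≤ y} ∩ D)).toReal / p = ∫ t in Set.Iic y, f1 t)
    (hF0 : ∀ y : ℝ, (μ ({ω | Y ω ≤ y} ∩ Dᶜ)).toReal / (1 - p) = ∫ t in Set.Iic y, f0 t)
    (L : ℝ → Ω → ℝ)
    (hL : ∀ u ω, L u ω = u * D.indicator (fun _ => (1 : ℝ)) ω + (1 - u) * Y ω)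
    (α : ℝ) (hα : α ∈ Set.Ioo (0 : ℝ) 1)
    (q : ℝ → ℝ) (hq : ∀ u, q u = quantile μ (L u) α)
    (cdp : ℝ → ℝ)
    (hcdp : ∀ u, cdp u = p * f1 ((q u - u) / (1 - u))
        / (p * f1 ((q u - u) / (1 - u)) + (1 - p) * f0 (q u / (1 - u)))) :
    (1 - α < p → Tendsto cdp (nhdsWithin 1 (Set.Ioo 0 1)) (nhds 1)) ∧
    (p < 1 - α → Tendsto cdp (nhdsWithin 1 (Set.Ioo 0 1)) (nhds 0)) := by
  obtain ⟨hp0, hp1⟩ := hp_mem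
  have h1p : 0 < 1 - p := sub_pos.2 hp1
  have hi0 := hf0_cont.integrable_of_eq_zero_off_Ioo hf0_zero
  have hi1 := hf1_cont.integrable_of_eq_zero_off_Ioo hf1_zero
  have hF0one : ∫ t in Iic 1, f0 t = 1 := by
    rw [setIntegral_Iic_eq_measure_div hf0_zero μ Y Dᶜ (1 - p) hF0, ← measureReal_def,
      probReal_compl_eq_one_sub hD, measureReal_def, ← hp, div_self h1p.ne']
  have hF1one : ∫ t in Iic 1, f1 t = 1 := by
    rw [setIntegral_Iic_eq_measure_div hf1_zero μ Y D p hF1, ← hp, div_self hp0.ne']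
  have hG := fun (u : ℝ) (hu : u < 1) =>
    toReal_measure_indicator_add_le μ hD Y hp0.ne' h1p.ne' hF1 hF0 hu
  have hnear : ∀ᶠ u in 𝓝[Ioo 0 1] (1 : ℝ), 1 / 2 ≤ u ∧ u < 1 := by
    filter_upwards [self_mem_nhdsWithin, nhdsWithin_le_nhds (Ioi_mem_nhds one_half_lt_one)]
      with u hu hu' using ⟨hu'.le, hu.2⟩
  refine ⟨fun hαp => ?_, fun hαp => ?_⟩
  · obtain ⟨c, hc, hFc, hFlt⟩ := exists_mem_Ioo_setIntegral_Iic_eq hi1 hf1_pos hf1_zero one_pos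
      hF1one (v := (α - (1 - p)) / p)
      ⟨div_pos (by linarith) hp0, (div_lt_one hp0).2 (by linarith [hα.2])⟩
    refine tendsto_const_nhds.congr' (hnear.mono fun u ⟨hu, hu1⟩ => ?_)
    rw [hcdp, hq, funext (hL u), quantile_eq_in_upper_component (hG u hu1) hp0 hp1.le hu hu1
      (fun y => (setIntegral_Iic_le hi0 hf0_pos hf0_zero y).trans_eq hF0one)
      (fun y hy => (setIntegral_Iic_eq_of_le hf0_zero hy).trans hF0one) hc.1.le hFc hFlt,
      mixture_ratio_upper_eq_one hf0_zero hf1_pos hp0 hc hu hu1]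
  · obtain ⟨c, hc, hFc, hFlt⟩ := exists_mem_Ioo_setIntegral_Iic_eq hi0 hf0_pos hf0_zero one_pos
      hF0one (v := α / (1 - p)) ⟨div_pos hα.1 h1p, (div_lt_one h1p).2 (by linarith)⟩
    refine tendsto_const_nhds.congr' (hnear.mono fun u ⟨hu, hu1⟩ => ?_)
    rw [hcdp, hq, funext (hL u), quantile_eq_in_lower_component (hG u hu1) hp1 hu hu1
      (fun y hy => setIntegral_Iic_eq_zero_of_le hf1_zero hy) hc.2.le hFc hFlt,
      mixture_ratio_lower_eq_zero hf1_zero hc.2.le hu hu1]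

/-- In the semi-asymptotic model with continuous conditional densities `f₁, f₀`
positive on `(0,1)` and vanishing outside, the conditional default probability
`P[D | L(u) = q_α(L(u))]`, given by the density ratio
`p f₁((q-u)/(1-u)) / (p f₁((q-u)/(1-u)) + (1-p) f₀(q/(1-u)))` with `q = q_α(L(u))`,
tends (as `u → 1⁻`) to `1` if `p > 1 - α` and to `0` if `p < 1 - α`. -/
theorem cond_default_prob_limit
    {Ω : Type*} [MeasurableSpace Ω] (μ : Measure Ω) [IsProbabilityMeasure μ]
    (D : Set Ω) (hD : MeasurableSet D)
    (Y : Ω → ℝ) (hY : Measurable Y)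
    (p : ℝ) (hp : p = (μ D).toReal) (hp_mem : p ∈ Set.Ioo (0 : ℝ) 1)
    (f0 f1 : ℝ → ℝ)
    (hf0_cont : Continuous f0) (hf1_cont : Continuous f1)
    (hf0_pos : ∀ z ∈ Set.Ioo (0 : ℝ) 1, 0 < f0 z)
    (hf1_pos : ∀ z ∈ Set.Ioo (0 : ℝ) 1, 0 < f1 z)
    (hf0_zero : ∀ z ∉ Set.Ioo (0 : ℝ) 1, f0 z = 0)
    (hf1_zero : ∀ z ∉ Set.Ioo (0 : ℝ) 1, f1 z = 0)
    -- f₁, f₀ are the conditional densities of Y given D and Dᶜ respectively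
    (hF1 : ∀ y : ℝ, (μ ({ω | Y ω ≤ y} ∩ D)).toReal / p = ∫ t in Set.Iic y, f1 t)
    (hF0 : ∀ y : ℝ, (μ ({ω | Y ω ≤ y} ∩ Dᶜ)).toReal / (1 - p) = ∫ t in Set.Iic y, f0 t)
    (L : ℝ → Ω → ℝ)
    (hL : ∀ u ω, L u ω = u * D.indicator (fun _ => (1 : ℝ)) ω + (1 - u) * Y ω)
    (α : ℝ) (hα : α ∈ Set.Ioo (0 : ℝ) 1) (hαp : α ≠ 1 - p)
    (q : ℝ → ℝ) (hq : ∀ u, q u = quantile μ (L u) α)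
    (cdp : ℝ → ℝ)
    (hcdp : ∀ u, cdp u = p * f1 ((q u - u) / (1 - u))
        / (p * f1 ((q u - u) / (1 - u)) + (1 - p) * f0 (q u / (1 - u)))) :
    (1 - α < p → Tendsto cdp (nhdsWithin 1 (Set.Ioo 0 1)) (nhds 1)) ∧
    (p < 1 - α → Tendsto cdp (nhdsWithin 1 (Set.Ioo 0 1)) (nhds 0)) :=
  cond_default_prob_limit_general μ D hD Y p hp hp_mem f0 f1 hf0_cont hf1_cont hf0_pos hf1_pos
    hf0_zero hf1_zero hF1 hF0 L hL α hα q hq cdp hcdp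
end

section
/- Let X and ξ be independent standard normal, D = {√τ·X + √(1−τ)·ξ ≤ a} with p = Φ(a), and Y = Φ((c − √ρ·X)/√(1−ρ)). Then the conditional distribution function of Y given D satisfies P[Y ≤ z | D] = 1 − p^{-1}·Φ_2(a, (c − √(1−ρ)·Φ^{-1}(z))/√ρ; √τ) for z ∈ (0,1), where Φ_2(·,·;θ) is the bivariate standard normal CDF with correlation θ. -/
/-!
Put `W = √τ X + √(1-τ) ξ` and `V = √(1-τ) X - √τ ξ`. The map `(X, ξ) ↦ (W, V)` is an orthogonal
reflection, so `(W, V)` is again a pair of independent standard normals, and `X = √τ W + √(1-τ) V`.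
Since `Φ` is strictly increasing, `{Y ≤ z} = {b ≤ X}` with `b = (c - √(1-ρ) Φ⁻¹(z)) / √ρ`, and since
`X` has no atoms, `P[b ≤ X, W ≤ a] = P[W ≤ a] - P[W ≤ a, √τ W + √(1-τ) V ≤ b] = p - Φ₂(a, b; √τ)`.
-/

open MeasureTheory ProbabilityTheory

/-- Standard normal cumulative distribution function. -/
noncomputable def stdNormalCDF (x : ℝ) : ℝ :=
  ((gaussianReal 0 1) (Set.Iic x)).toReal

/-- Bivariate standard normal CDF with correlation `θ`:
`Φ₂(x, y; θ) = P[Z₁ ≤ x, θ Z₁ + √(1-θ²) Z₂ ≤ y]` for `Z₁, Z₂` i.i.d. standard normal. -/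
noncomputable def biNormalCDF (x y θ : ℝ) : ℝ :=
  (((gaussianReal 0 1).prod (gaussianReal 0 1))
    {z : ℝ × ℝ | z.1 ≤ x ∧ θ * z.1 + Real.sqrt (1 - θ ^ 2) * z.2 ≤ y}).toReal

section

open Real

lemma map_reflection_gaussianReal_prod (v : NNReal) (θ : ℝ) :
    ((gaussianReal 0 v).prod (gaussianReal 0 v)).map
        (fun z : ℝ × ℝ => (cos θ * z.1 + sin θ * z.2, sin θ * z.1 - cos θ * z.2))
      = (gaussianReal 0 v).prod (gaussianReal 0 v) := by
  have hreflect : (fun z : ℝ × ℝ => (cos θ * z.1 + sin θ * z.2, sin θ * z.1 - cos θ * z.2))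
      = Prod.map id (fun y => -y) ∘ ContinuousLinearMap.rotation θ := by
    ext z
    · simp [ContinuousLinearMap.rotation_apply]
    · simp [ContinuousLinearMap.rotation_apply]
      ring
  rw [hreflect, ← Measure.map_map (by fun_prop) (by fun_prop),
    IsGaussian.map_rotation_eq_self integral_id_gaussianReal,
    ← Measure.map_prod_map _ _ measurable_id measurable_neg, Measure.map_id,
    gaussianReal_map_neg, neg_zero]

lemma stdNormalCDF_pos (a : ℝ) : 0 < stdNormalCDF a :=
  ENNReal.toReal_pos (fun h => by
    simpa using gaussianReal_absolutelyContinuous' 0 one_ne_zero h) (measure_ne_top _ _)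

lemma stdNormalCDF_strictMono : StrictMono stdNormalCDF := by
  intro u v huv
  have hpos : gaussianReal 0 1 (Set.Ioc u v) ≠ 0 := fun h =>
    huv.not_ge (by simpa using gaussianReal_absolutelyContinuous' 0 one_ne_zero h)
  have hdiff : stdNormalCDF v - stdNormalCDF u = (gaussianReal 0 1).real (Set.Ioc u v) := by
    rw [← Set.Iic_sdiff_Iic, measureReal_sdiff (Set.Iic_subset_Iic.2 huv.le) measurableSet_Iic]
    rfl
  have hpos_real : 0 < (gaussianReal 0 1).real (Set.Ioc u v) :=
    ENNReal.toReal_pos hpos (measure_ne_top _ _)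
  linarith

lemma stdNormalCDF_div_le_stdNormalCDF_iff {σ κ : ℝ} (hσ : 0 < σ) (hκ : 0 < κ) (c q x : ℝ) :
    stdNormalCDF ((c - κ * x) / σ) ≤ stdNormalCDF q ↔ (c - σ * q) / κ ≤ x := by
  rw [stdNormalCDF_strictMono.le_iff_le, div_le_iff₀ hσ, div_le_iff₀ hκ]
  constructor <;> intro h <;> linarith

variable {Ω : Type*} [MeasurableSpace Ω] {μ : Measure Ω} {X ξ : Ω → ℝ}

lemma measureReal_le_inter_eq_sub [IsFiniteMeasure μ] (hX : Measurable X) {b : ℝ}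
    (hb : μ.map X {b} = 0) {D : Set Ω} (hD : MeasurableSet D) :
    μ.real ({ω | b ≤ X ω} ∩ D) = μ.real D - μ.real ({ω | X ω ≤ b} ∩ D) := by
  have hlt : {ω | X ω < b} =ᵐ[μ] {ω | X ω ≤ b} :=
    ae_eq_comp hX.aemeasurable (Iio_ae_eq_Iic' hb)
  rw [measureReal_congr (hlt.symm.inter (ae_eq_refl D)), ← measureReal_sdiff Set.inter_subset_right
    ((measurableSet_lt hX measurable_const).inter hD)]
  congr 1
  ext ω
  simp [not_lt, and_comm]

lemma map_reflection_of_map_prodMk (hX : Measurable X) (hξ : Measurable ξ)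
    (hlaw : μ.map (fun ω => (X ω, ξ ω)) = (gaussianReal 0 1).prod (gaussianReal 0 1))
    {s : ℝ} (hs₀ : 0 ≤ s) (hs₁ : s ≤ 1) :
    μ.map (fun ω => (s * X ω + √(1 - s ^ 2) * ξ ω, √(1 - s ^ 2) * X ω - s * ξ ω))
      = (gaussianReal 0 1).prod (gaussianReal 0 1) := by
  have h := map_reflection_gaussianReal_prod 1 (arccos s)
  rw [cos_arccos (by linarith) hs₁, sin_arccos] at h
  rw [← h, ← hlaw, Measure.map_map (by fun_prop) (by fun_prop)]
  rfl

lemma measureReal_add_le_eq_stdNormalCDF (hX : Measurable X) (hξ : Measurable ξ)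
    (hlaw : μ.map (fun ω => (X ω, ξ ω)) = (gaussianReal 0 1).prod (gaussianReal 0 1))
    {s : ℝ} (hs₀ : 0 ≤ s) (hs₁ : s ≤ 1) (a : ℝ) :
    μ.real {ω | s * X ω + √(1 - s ^ 2) * ξ ω ≤ a} = stdNormalCDF a := by
  have hpre : {ω | s * X ω + √(1 - s ^ 2) * ξ ω ≤ a}
      = (fun ω => (s * X ω + √(1 - s ^ 2) * ξ ω, √(1 - s ^ 2) * X ω - s * ξ ω)) ⁻¹'
          (Set.Iic a ×ˢ Set.univ) := by
    ext ω
    simp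
  rw [hpre, ← map_measureReal_apply (by fun_prop) (measurableSet_Iic.prod .univ),
    map_reflection_of_map_prodMk hX hξ hlaw hs₀ hs₁, measureReal_prod_prod, probReal_univ,
    mul_one]
  rfl

lemma measureReal_le_inter_add_le_eq_biNormalCDF (hX : Measurable X) (hξ : Measurable ξ)
    (hlaw : μ.map (fun ω => (X ω, ξ ω)) = (gaussianReal 0 1).prod (gaussianReal 0 1))
    {s : ℝ} (hs₀ : 0 ≤ s) (hs₁ : s ≤ 1) (a b : ℝ) :
    μ.real ({ω | X ω ≤ b} ∩ {ω | s * X ω + √(1 - s ^ 2) * ξ ω ≤ a}) = biNormalCDF a b s := by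
  have hX_eq (ω : Ω) : s * (s * X ω + √(1 - s ^ 2) * ξ ω)
      + √(1 - s ^ 2) * (√(1 - s ^ 2) * X ω - s * ξ ω) = X ω := by
    linear_combination X ω * sq_sqrt (by nlinarith : (0 : ℝ) ≤ 1 - s ^ 2)
  have hmeas : MeasurableSet {z : ℝ × ℝ | z.1 ≤ a ∧ s * z.1 + √(1 - s ^ 2) * z.2 ≤ b} := by
    measurability
  rw [biNormalCDF, ← map_reflection_of_map_prodMk hX hξ hlaw hs₀ hs₁, ← measureReal_def,
    map_measureReal_apply (by fun_prop) hmeas]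
  congr 1
  ext ω
  simp only [Set.mem_inter_iff, Set.mem_ofPred_eq, Set.mem_preimage, hX_eq]
  exact and_comm

end

/-- With `X, ξ` independent standard normal, `D = {√τ X + √(1-τ) ξ ≤ a}`, `p = Φ(a)`,
`Y = Φ((c - √ρ X)/√(1-ρ))`, the conditional CDF of `Y` given `D` is
`F₁(z) = 1 - p⁻¹ Φ₂(a, (c - √(1-ρ) Φ⁻¹(z))/√ρ ; √τ)` for `z ∈ (0,1)`. -/
theorem condCDF_given_default
    {Ω : Type*} [MeasurableSpace Ω] (μ : Measure Ω) [IsProbabilityMeasure μ]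
    (X ξ : Ω → ℝ) (hX : Measurable X) (hξ : Measurable ξ)
    (hXlaw : Measure.map X μ = gaussianReal 0 1)
    (hξlaw : Measure.map ξ μ = gaussianReal 0 1)
    (hindep : IndepFun X ξ μ)
    (τ ρ a c : ℝ) (hτ : τ ∈ Set.Ioo (0 : ℝ) 1) (hρ : ρ ∈ Set.Ioo (0 : ℝ) 1)
    (D : Set Ω)
    (hD : D = {ω | Real.sqrt τ * X ω + Real.sqrt (1 - τ) * ξ ω ≤ a})
    (p : ℝ) (hp : p = stdNormalCDF a)
    (Y : Ω → ℝ)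
    (hY : Y = fun ω => stdNormalCDF ((c - Real.sqrt ρ * X ω) / Real.sqrt (1 - ρ)))
    (Φinv : ℝ → ℝ)
    (hΦinv : ∀ z ∈ Set.Ioo (0 : ℝ) 1, stdNormalCDF (Φinv z) = z) :
    ∀ z ∈ Set.Ioo (0 : ℝ) 1,
      (μ ({ω | Y ω ≤ z} ∩ D)).toReal / p
        = 1 - p⁻¹ * biNormalCDF a ((c - Real.sqrt (1 - ρ) * Φinv z) / Real.sqrt ρ)
            (Real.sqrt τ) := by
  intro z hz
  subst hD hp hY
  set b := (c - √(1 - ρ) * Φinv z) / √ρ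
  have hlaw : μ.map (fun ω => (X ω, ξ ω)) = (gaussianReal 0 1).prod (gaussianReal 0 1) := by
    rw [(indepFun_iff_map_prod_eq_prod_map_map hX.aemeasurable hξ.aemeasurable).mp hindep,
      hXlaw, hξlaw]
  have hs₀ : 0 ≤ √τ := Real.sqrt_nonneg τ
  have hs₁ : √τ ≤ 1 := Real.sqrt_le_one.mpr hτ.2.le
  have ht : √(1 - √τ ^ 2) = √(1 - τ) := by rw [Real.sq_sqrt hτ.1.le]
  have hD := measureReal_add_le_eq_stdNormalCDF hX hξ hlaw hs₀ hs₁ a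
  have hXD := measureReal_le_inter_add_le_eq_biNormalCDF hX hξ hlaw hs₀ hs₁ a b
  rw [ht] at hD hXD
  have hYX : {ω | stdNormalCDF ((c - √ρ * X ω) / √(1 - ρ)) ≤ z} = {ω | b ≤ X ω} := by
    ext ω
    rw [Set.mem_ofPred_eq, Set.mem_ofPred_eq, ← hΦinv z hz]
    exact stdNormalCDF_div_le_stdNormalCDF_iff (Real.sqrt_pos.2 (by linarith [hρ.2]))
      (Real.sqrt_pos.2 hρ.1) c _ _
  have hb : μ.map X {b} = 0 := by
    rw [hXlaw]
    exact gaussianReal_absolutelyContinuous 0 one_ne_zero Real.volume_singleton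
  rw [← measureReal_def, hYX, measureReal_le_inter_eq_sub hX hb
    (measurableSet_le (by fun_prop) measurable_const), hD, hXD]
  field_simp [(stdNormalCDF_pos a).ne']
end
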